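/- arXiv:math/9901122 — 4 statements merged into one kernel-verified Lean document; each statement's English description precedes it below -/
import Mathlib

section
/- Let S be an invertible bounded operator on ℓ²(ℤ) with ‖S^{-1}‖ ≤ A^{-1}, let g ∈ ℓ²(ℤ), and let P_N be the orthogonal projection onto coordinates {-N,...,N}. Assume S_N = P_N S P_N is invertible on Im P_N and that P_N g = g (i.e., g is supported in [-N,N]). Set γ = S^{-1} g and γ^{(N)} = S_N^{-1} P_N g. Then ‖γ - γ^{(N)}‖ ≤ A^{-1} ‖(S_N - S) S_N^{-1} P_N g‖. -/
noncomputable section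

abbrev L2Z := lp (fun _ : ℤ => ℂ) 2

/-- the key abstract error estimate (mainineq): if `S` is invertible
with `‖S⁻¹‖ ≤ A⁻¹`, `P_N` is the orthogonal projection onto coordinates `{-N,…,N}`,
`g` is supported in `[-N,N]`, and `T` inverts `S_N = P_N S P_N` on the range of `P_N`,
then `‖γ - γ^{(N)}‖ ≤ A⁻¹ ‖(S_N - S) S_N⁻¹ P_N g‖`. -/
theorem finite_section_error_estimate
    (S R : L2Z →L[ℂ] L2Z)
    (hR1 : R.comp S = ContinuousLinearMap.id ℂ L2Z)
    (hR2 : S.comp R = ContinuousLinearMap.id ℂ L2Z)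
    (A : ℝ) (hA : 0 < A) (hRnorm : ‖R‖ ≤ A⁻¹)
    (N : ℕ) (P : L2Z →L[ℂ] L2Z)
    (hP : ∀ (f : L2Z) (k : ℤ), (P f : ℤ → ℂ) k = if |k| ≤ (N : ℤ) then f k else 0)
    (SN : L2Z →L[ℂ] L2Z) (hSN : SN = P.comp (S.comp P))
    (T : L2Z →L[ℂ] L2Z)
    (hTrange : ∀ x : L2Z, P (T x) = T x)
    (hT1 : ∀ x : L2Z, P x = x → SN (T x) = x)
    (hT2 : ∀ x : L2Z, P x = x → T (SN x) = x)
    (g : L2Z) (hg : P g = g)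
    (γ γN : L2Z) (hγ : γ = R g) (hγN : γN = T (P g)) :
    ‖γ - γN‖ ≤ A⁻¹ * ‖(SN - S) (T (P g))‖ := by
  -- key identity: γ - γN = R ((SN - S) (T (P g)))
  have hSNTg : SN (T (P g)) = g := by rw [hg]; exact hT1 g hg
  have hRS : ∀ x : L2Z, R (S x) = x := fun x =>
    congrArg (fun f : L2Z →L[ℂ] L2Z => f x) hR1
  have hkey : γ - γN = R ((SN - S) (T (P g))) := by
    rw [hγ, hγN, ContinuousLinearMap.sub_apply, map_sub, hSNTg, hRS, hg]
  rw [hkey]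
  calc ‖R ((SN - S) (T (P g)))‖ ≤ ‖R‖ * ‖(SN - S) (T (P g))‖ :=
        R.le_opNorm _
    _ ≤ A⁻¹ * ‖(SN - S) (T (P g))‖ :=
        mul_le_mul_of_nonneg_right hRnorm (norm_nonneg _)
end
end

section
/- Let m, s, N ∈ ℕ with N > 2s, let D > 0, λ ∈ (0,1), B > 0. Suppose E is a biinfinite matrix with E_{k,l} = 0 whenever |k| ≤ N and |l| ≤ N, E_{k,l} = 0 whenever |k-l| > 2s, and |E_{k,l}| ≤ B for all k,l. Suppose φ ∈ ℓ²(ℤ) satisfies |φ_k| ≤ D·λ^{|k|}·λ^{-s}/(1-λ) and φ_k = 0 for |k| > N. Then e = Eφ satisfies ‖e‖ ≤ √2·B·D·λ^N·(λ^s - λ^{s+1})^{-3}. -/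
open scoped BigOperators

lemma Icc_succ_left_int (a b : ℤ) (h : a ≤ b) :
    Finset.Icc a b = insert a (Finset.Icc (a+1) b) := by
  ext x; simp only [Finset.mem_Icc, Finset.mem_insert]; omega

lemma geom_Icc_le {lam : ℝ} (h0 : 0 < lam) (h1 : lam < 1) (a b : ℤ) :
    ∑ l ∈ Finset.Icc a b, lam ^ l ≤ lam ^ a / (1 - lam) := by
  have h1l : 0 < 1 - lam := by linarith
  have hpow : ∀ x : ℤ, (0:ℝ) < lam ^ x := fun x => zpow_pos h0 x
  rcases le_or_gt a b with hab | hab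
  · obtain ⟨n, rfl⟩ : ∃ n : ℕ, b = a + n := ⟨(b - a).toNat, by omega⟩
    clear hab
    induction n generalizing a with
    | zero =>
      simp only [Nat.cast_zero, add_zero, Finset.Icc_self, Finset.sum_singleton]
      rw [le_div_iff₀ h1l]
      nlinarith [hpow a]
    | succ n ih =>
      rw [Icc_succ_left_int a _ (by push_cast; omega), Finset.sum_insert (by simp)]
      have h2 := ih (a + 1)
      rw [show a + ((n+1:ℕ):ℤ) = a + 1 + (n:ℕ) by push_cast; ring]
      rw [le_div_iff₀ h1l] at h2 ⊢
      have : lam ^ (a+1) = lam ^ a * lam := by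
        rw [zpow_add_one₀ (ne_of_gt h0)]
      nlinarith [hpow a, hpow (a+1)]
  · rw [Finset.Icc_eq_empty (by omega)]
    simp only [Finset.sum_empty]
    positivity

lemma sum_neg_exp (a b : ℤ) (f : ℤ → ℝ) :
    ∑ l ∈ Finset.Icc a b, f (-l) = ∑ l ∈ Finset.Icc (-b) (-a), f l := by
  refine Finset.sum_nbij' (fun l => -l) (fun l => -l) ?_ ?_ ?_ ?_ ?_ <;>
    intros <;> simp_all only [Finset.mem_Icc] <;> omega

set_option maxHeartbeats 1000000 in
/-- central computational estimate in the proof of Theorem 3.5(ii).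
If `E` vanishes on the window `[-N,N]²`, is `2s`-banded with entries bounded by `B`,
and `φ` decays like `D λ^{|k|} λ^{-s}/(1-λ)` and is supported in `[-N,N]`, then
`‖Eφ‖ ≤ √2 B D λ^N (λ^s - λ^{s+1})^{-3}`. -/
theorem truncation_error_estimate
    (s N : ℕ) (hN : 2 * s < N)
    (D B lam : ℝ) (hD : 0 < D) (hB : 0 < B) (hlam0 : 0 < lam) (hlam1 : lam < 1)
    (E : ℤ → ℤ → ℂ)
    (hE0 : ∀ k l : ℤ, |k| ≤ (N : ℤ) → |l| ≤ (N : ℤ) → E k l = 0)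
    (hEband : ∀ k l : ℤ, 2 * (s : ℤ) < |k - l| → E k l = 0)
    (hEbd : ∀ k l : ℤ, ‖E k l‖ ≤ B)
    (φ : ℤ → ℂ)
    (hφdecay : ∀ k : ℤ, ‖φ k‖ ≤ D * lam ^ (|k| : ℤ) * lam ^ (-(s : ℤ)) / (1 - lam))
    (hφsupp : ∀ k : ℤ, (N : ℤ) < |k| → φ k = 0)
    (e : ℤ → ℂ) (he : ∀ k : ℤ, e k = ∑' l : ℤ, E k l * φ l) :
    Real.sqrt (∑' k : ℤ, ‖e k‖ ^ 2) ≤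
      Real.sqrt 2 * B * D * lam ^ (N : ℤ) * (lam ^ (s : ℤ) - lam ^ ((s : ℤ) + 1)) ^ (-3 : ℤ) := by
  have hne : lam ≠ 0 := ne_of_gt hlam0
  have h1l : 0 < 1 - lam := by linarith
  have hpow : ∀ x : ℤ, (0:ℝ) < lam ^ x := fun x => zpow_pos hlam0 x
  set a : ℤ := (N : ℤ) with ha
  have haN : 2 * (s:ℤ) < a := by simp only [ha]; exact_mod_cast hN
  set M : ℝ := B * D / (1 - lam) ^ 2 with hM
  have hMpos : 0 < M := by positivity
  set C : ℝ := B * D * lam ^ (-(s:ℤ)) / (1 - lam) with hC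
  have hCpos : 0 < C := by positivity
  -- per-term bound
  have hterm : ∀ k l : ℤ, ‖E k l * φ l‖ ≤ C * lam ^ (|l|) := by
    intro k l
    rw [norm_mul]
    calc ‖E k l‖ * ‖φ l‖ ≤ B * (D * lam ^ (|l|) * lam ^ (-(s:ℤ)) / (1 - lam)) := by
          apply mul_le_mul (hEbd k l) (hφdecay l) (norm_nonneg _) hB.le
      _ = C * lam ^ (|l|) := by rw [hC]; ring
  -- key pointwise bound
  have key : ∀ k : ℤ, a < |k| → ‖e k‖ ≤ M * lam ^ (|k| - 3*(s:ℤ)) := by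
    intro k hk
    rcases abs_cases k with ⟨habs, hsgn⟩ | ⟨habs, hsgn⟩
    · -- k positive, a < k
      rw [habs] at hk ⊢
      have hek : e k = ∑ l ∈ Finset.Icc (k - 2*(s:ℤ)) a, E k l * φ l := by
        rw [he k]
        apply tsum_eq_sum
        intro l hl
        simp only [Finset.mem_Icc, not_and, not_le] at hl
        rcases le_or_gt (|l|) a with hla | hla
        · have h1 : l ≤ a := (abs_le.mp hla).2
          have h2 : l < k - 2*(s:ℤ) := by
            by_contra hcon; push_neg at hcon
            have := hl hcon; omega
          have hb : 2*(s:ℤ) < |k - l| := by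
            rw [abs_of_nonneg (by omega)]; omega
          rw [hEband k l hb, zero_mul]
        · rw [hφsupp l hla, mul_zero]
      rw [hek]
      calc ‖∑ l ∈ Finset.Icc (k - 2*(s:ℤ)) a, E k l * φ l‖
          ≤ ∑ l ∈ Finset.Icc (k - 2*(s:ℤ)) a, ‖E k l * φ l‖ := norm_sum_le _ _
        _ ≤ ∑ l ∈ Finset.Icc (k - 2*(s:ℤ)) a, C * lam ^ l := by
            apply Finset.sum_le_sum
            intro l hl
            simp only [Finset.mem_Icc] at hl
            have h3 : |l| = l := abs_of_nonneg (by omega)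
            have h4 := hterm k l
            rwa [h3] at h4
        _ = C * ∑ l ∈ Finset.Icc (k - 2*(s:ℤ)) a, lam ^ l := by rw [Finset.mul_sum]
        _ ≤ C * (lam ^ (k - 2*(s:ℤ)) / (1 - lam)) :=
            mul_le_mul_of_nonneg_left (geom_Icc_le hlam0 hlam1 _ _) hCpos.le
        _ = M * lam ^ (k - 3*(s:ℤ)) := by
            rw [hC, hM, show k - 3*(s:ℤ) = -(s:ℤ) + (k - 2*(s:ℤ)) by ring, zpow_add₀ hne]
            field_simp
    · -- k negative, a < -k
      rw [habs] at hk ⊢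
      have hek : e k = ∑ l ∈ Finset.Icc (-a) (k + 2*(s:ℤ)), E k l * φ l := by
        rw [he k]
        apply tsum_eq_sum
        intro l hl
        simp only [Finset.mem_Icc, not_and, not_le] at hl
        rcases le_or_gt (|l|) a with hla | hla
        · have h1 : -a ≤ l := (abs_le.mp hla).1
          have h2 : k + 2*(s:ℤ) < l := hl h1
          have hb : 2*(s:ℤ) < |k - l| := by
            rw [abs_of_nonpos (by omega)]; omega
          rw [hEband k l hb, zero_mul]
        · rw [hφsupp l hla, mul_zero]
      rw [hek]
      calc ‖∑ l ∈ Finset.Icc (-a) (k + 2*(s:ℤ)), E k l * φ l‖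
          ≤ ∑ l ∈ Finset.Icc (-a) (k + 2*(s:ℤ)), ‖E k l * φ l‖ := norm_sum_le _ _
        _ ≤ ∑ l ∈ Finset.Icc (-a) (k + 2*(s:ℤ)), C * lam ^ (-l) := by
            apply Finset.sum_le_sum
            intro l hl
            simp only [Finset.mem_Icc] at hl
            have h3 : |l| = -l := abs_of_nonpos (by omega)
            have h4 := hterm k l
            rwa [h3] at h4
        _ = ∑ l ∈ Finset.Icc (-(k + 2*(s:ℤ))) a, C * lam ^ l := by
            have h5 := sum_neg_exp (-a) (k + 2*(s:ℤ)) (fun m => C * lam ^ m)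
            simpa using h5
        _ = C * ∑ l ∈ Finset.Icc (-(k + 2*(s:ℤ))) a, lam ^ l := by rw [Finset.mul_sum]
        _ ≤ C * (lam ^ (-(k + 2*(s:ℤ))) / (1 - lam)) :=
            mul_le_mul_of_nonneg_left (geom_Icc_le hlam0 hlam1 _ _) hCpos.le
        _ = M * lam ^ (-k - 3*(s:ℤ)) := by
            rw [hC, hM, show -k - 3*(s:ℤ) = -(s:ℤ) + (-(k + 2*(s:ℤ))) by ring, zpow_add₀ hne]
            field_simp
  -- vanishing of e outside the annulus
  have hzero : ∀ k : ℤ,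
      k ∉ Finset.Icc (a+1) (a+2*(s:ℤ)) ∪ Finset.Icc (-a-2*(s:ℤ)) (-a-1) → e k = 0 := by
    intro k hk
    simp only [Finset.mem_union, Finset.mem_Icc, not_or, not_and, not_le] at hk
    rw [he k]
    have hz : ∀ l : ℤ, E k l * φ l = 0 := by
      intro l
      rcases le_or_gt (|l|) a with hla | hla
      · rcases le_or_gt (|k|) a with hka | hka
        · rw [hE0 k l hka hla, zero_mul]
        · have hk2 : a + 2*(s:ℤ) < |k| := by
            rcases abs_cases k with ⟨h1,h2⟩|⟨h1,h2⟩ <;> rw [h1] at hka ⊢ <;> omega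
          have hb : 2*(s:ℤ) < |k - l| := by
            have h6 := abs_sub_abs_le_abs_sub k l
            have h7 : |l| ≤ a := hla
            linarith
          rw [hEband k l hb, zero_mul]
      · rw [hφsupp l hla, mul_zero]
    simp only [hz]
    exact tsum_zero
  -- reduce tsum to finite sum
  set S := Finset.Icc (a+1) (a+2*(s:ℤ)) ∪ Finset.Icc (-a-2*(s:ℤ)) (-a-1) with hS
  have htsum : ∑' k : ℤ, ‖e k‖^2 = ∑ k ∈ S, ‖e k‖^2 :=
    tsum_eq_sum (fun k hk => by rw [hzero k hk]; simp)
  have hdisj : Disjoint (Finset.Icc (a+1) (a+2*(s:ℤ))) (Finset.Icc (-a-2*(s:ℤ)) (-a-1)) := by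
    rw [Finset.disjoint_left]
    intro x hx hx'
    simp only [Finset.mem_Icc] at hx hx'
    omega
  have hsplit : ∑ k ∈ S, ‖e k‖^2 =
      ∑ k ∈ Finset.Icc (a+1) (a+2*(s:ℤ)), ‖e k‖^2
      + ∑ k ∈ Finset.Icc (-a-2*(s:ℤ)) (-a-1), ‖e k‖^2 := Finset.sum_union hdisj
  set Q : ℝ := ∑ k ∈ Finset.Icc (a+1) (a+2*(s:ℤ)), (M * lam ^ (k - 3*(s:ℤ)))^2 with hQ
  have hpos_le : ∑ k ∈ Finset.Icc (a+1) (a+2*(s:ℤ)), ‖e k‖^2 ≤ Q := by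
    apply Finset.sum_le_sum
    intro k hk
    simp only [Finset.mem_Icc] at hk
    have h1 : a < |k| := by rw [abs_of_nonneg (by omega)]; omega
    have h2 := key k h1
    rw [abs_of_nonneg (by omega : (0:ℤ) ≤ k)] at h2
    exact pow_le_pow_left₀ (norm_nonneg _) h2 2
  have hneg_le : ∑ k ∈ Finset.Icc (-a-2*(s:ℤ)) (-a-1), ‖e k‖^2 ≤ Q := by
    have step : ∑ k ∈ Finset.Icc (-a-2*(s:ℤ)) (-a-1), ‖e k‖^2
        ≤ ∑ k ∈ Finset.Icc (-a-2*(s:ℤ)) (-a-1), (M * lam ^ (-k - 3*(s:ℤ)))^2 := by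
      apply Finset.sum_le_sum
      intro k hk
      simp only [Finset.mem_Icc] at hk
      have h1 : a < |k| := by rw [abs_of_nonpos (by omega)]; omega
      have h2 := key k h1
      rw [abs_of_nonpos (by omega : k ≤ 0)] at h2
      exact pow_le_pow_left₀ (norm_nonneg _) h2 2
    refine step.trans (le_of_eq ?_)
    have h5 := sum_neg_exp (-a-2*(s:ℤ)) (-a-1) (fun m => (M * lam ^ (m - 3*(s:ℤ)))^2)
    rw [show -(-a-1) = a+1 by ring, show -(-a-2*(s:ℤ)) = a+2*(s:ℤ) by ring] at h5
    rw [hQ, ← h5]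
  -- geometric bound for Q
  set mu : ℝ := lam^2 with hmu
  have hmu0 : (0:ℝ) < mu := by positivity
  have hmu1 : mu < 1 := by nlinarith
  have hmune : mu ≠ 0 := ne_of_gt hmu0
  have hsq : ∀ x : ℤ, (lam ^ x)^2 = mu ^ x := by
    intro x
    rw [hmu, ← zpow_natCast (lam ^ x) 2, ← zpow_mul, mul_comm, zpow_mul, zpow_natCast]
  have hQle : Q ≤ M^2 * (mu ^ (a + 1 - 3*(s:ℤ)) / (1 - mu)) := by
    have hQeq : Q = M^2 * ∑ k ∈ Finset.Icc (a+1) (a+2*(s:ℤ)), mu ^ (k - 3*(s:ℤ)) := by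
      rw [hQ, Finset.mul_sum]
      apply Finset.sum_congr rfl
      intro k _
      rw [mul_pow, hsq]
    rw [hQeq]
    apply mul_le_mul_of_nonneg_left _ (by positivity)
    have hre : ∑ k ∈ Finset.Icc (a+1) (a+2*(s:ℤ)), mu ^ (k - 3*(s:ℤ))
        = ∑ j ∈ Finset.Icc (a+1-3*(s:ℤ)) (a+2*(s:ℤ)-3*(s:ℤ)), mu ^ j := by
      refine Finset.sum_nbij' (fun k => k - 3*(s:ℤ)) (fun j => j + 3*(s:ℤ)) ?_ ?_ ?_ ?_
        (fun k _ => rfl) <;> intros <;> simp_all only [Finset.mem_Icc] <;> omega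
    rw [hre]
    exact geom_Icc_le hmu0 hmu1 _ _
  have hT : ∑' k : ℤ, ‖e k‖^2 ≤ 2 * (M^2 * (mu ^ (a + 1 - 3*(s:ℤ)) / (1 - mu))) := by
    rw [htsum, hsplit]
    linarith [hpos_le, hneg_le, hQle]
  -- final constant
  set R : ℝ := B * D * lam ^ (a - 3*(s:ℤ)) / (1 - lam)^3 with hR
  have hRpos : 0 < R := by positivity
  have hfinal : 2 * (M^2 * (mu ^ (a + 1 - 3*(s:ℤ)) / (1 - mu))) ≤ 2 * R^2 := by
    have e1 : mu ^ (a + 1 - 3*(s:ℤ)) = mu ^ (a - 3*(s:ℤ)) * mu := by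
      rw [show a + 1 - 3*(s:ℤ) = (a - 3*(s:ℤ)) + 1 by ring, zpow_add_one₀ hmune]
    have e2 : R^2 = M^2 * (mu ^ (a - 3*(s:ℤ)) * (1 / (1-lam)^2)) := by
      rw [hR, hM, ← hsq]
      field_simp
    rw [e1, e2]
    have hmuineq : mu / (1 - mu) ≤ 1 / (1 - lam)^2 := by
      rw [div_le_div_iff₀ (by linarith) (by positivity), hmu]
      nlinarith
    have hP : (0:ℝ) < mu ^ (a - 3*(s:ℤ)) := zpow_pos hmu0 _
    have : mu ^ (a - 3*(s:ℤ)) * mu / (1 - mu) = mu ^ (a - 3*(s:ℤ)) * (mu / (1 - mu)) := by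
      ring
    rw [this]
    have h7 : mu ^ (a - 3*(s:ℤ)) * (mu / (1 - mu))
        ≤ mu ^ (a - 3*(s:ℤ)) * (1 / (1 - lam)^2) :=
      mul_le_mul_of_nonneg_left hmuineq hP.le
    have h8 : M^2 * (mu ^ (a - 3*(s:ℤ)) * (mu / (1 - mu)))
        ≤ M^2 * (mu ^ (a - 3*(s:ℤ)) * (1 / (1 - lam)^2)) :=
      mul_le_mul_of_nonneg_left h7 (by positivity)
    linarith
  -- rewrite the right-hand side
  have hRHS : Real.sqrt 2 * B * D * lam ^ a * (lam ^ (s:ℤ) - lam ^ ((s:ℤ) + 1)) ^ (-3 : ℤ)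
      = Real.sqrt 2 * R := by
    have h1 : lam ^ ((s:ℤ)+1) = lam ^ (s:ℤ) * lam := zpow_add_one₀ hne _
    have h2 : lam ^ (s:ℤ) - lam ^ (s:ℤ) * lam = lam ^ (s:ℤ) * (1 - lam) := by ring
    have hsp : (0:ℝ) < lam ^ (s:ℤ) := hpow _
    have h3 : (lam ^ (s:ℤ) * (1 - lam)) ^ (-3 : ℤ)
        = 1 / ((lam ^ (s:ℤ))^(3:ℕ) * (1-lam)^(3:ℕ)) := by
      rw [zpow_neg, ← mul_pow, ← zpow_natCast (lam ^ (s:ℤ) * (1-lam)) 3]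
      norm_num
    have h4 : (lam ^ (s:ℤ))^(3:ℕ) = lam ^ (3*(s:ℤ)) := by
      rw [← zpow_natCast (lam ^ (s:ℤ)) 3, ← zpow_mul, mul_comm]
      norm_num
    have h5 : lam ^ a = lam ^ (a - 3*(s:ℤ)) * lam ^ (3*(s:ℤ)) := by
      rw [← zpow_add₀ hne]; ring_nf
    rw [h1, h2, h3, h4, hR, h5]
    have h6 : (0:ℝ) < lam ^ (3*(s:ℤ)) := hpow _
    field_simp
  rw [hRHS]
  calc Real.sqrt (∑' k : ℤ, ‖e k‖^2) ≤ Real.sqrt (2 * R^2) :=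
        Real.sqrt_le_sqrt (hT.trans hfinal)
    _ = Real.sqrt 2 * R := by
        rw [Real.sqrt_mul (by norm_num), Real.sqrt_sq hRpos.le]
end

section
/- Fix λ ∈ (0,1), D > 0, s ∈ ℕ, N > 3s. Suppose M is a matrix indexed by {-N,...,N}² satisfying |M_{k,l}| ≤ D·λ^{|k-l|} when |k-l| ≤ N and |M_{k,l}| ≤ D·λ^{2N+1-|k-l|} when N+1 ≤ |k-l| ≤ 2N. Let g be a vector supported in {-s,...,s} with all entries bounded by 1 in absolute value. Then φ = M g satisfies |φ_k| ≤ (2D/(1-λ))·λ^{|k|-s} for all k with N-2s < |k| ≤ N. -/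
open scoped BigOperators

lemma geo_nat_aux (lam : ℝ) (h0 : 0 ≤ lam) (h1 : lam < 1) (n : ℕ) :
    ∑ j ∈ Finset.range n, lam ^ j ≤ 1 / (1 - lam) := by
  have h1' : (0:ℝ) < 1 - lam := by linarith
  rw [geom_sum_eq (ne_of_lt h1)]
  have h2 : (lam ^ n - 1) / (lam - 1) = (1 - lam ^ n) / (1 - lam) := by
    rw [← neg_sub 1 (lam ^ n), ← neg_sub 1 lam, neg_div_neg_eq]
  rw [h2]
  gcongr
  nlinarith [pow_nonneg h0 n]

/-- geometric sum over an integer interval, exponent `l - a`. -/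
lemma geo_int_aux (lam : ℝ) (h0 : 0 < lam) (h1 : lam < 1) (a b : ℤ) :
    ∑ l ∈ Finset.Icc a b, lam ^ (l - a) ≤ 1 / (1 - lam) := by
  have key : ∑ l ∈ Finset.Icc a b, lam ^ (l - a)
      = ∑ j ∈ Finset.range ((b + 1 - a).toNat), lam ^ j := by
    refine Finset.sum_nbij' (fun l => (l - a).toNat) (fun j => a + (j : ℤ)) ?_ ?_ ?_ ?_ ?_
    · intro l hl
      simp only [Finset.mem_Icc] at hl
      simp only [Finset.mem_range]
      omega
    · intro j hj
      simp only [Finset.mem_range] at hj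
      simp only [Finset.mem_Icc]
      omega
    · intro l hl
      simp only [Finset.mem_Icc] at hl
      show a + (((l - a).toNat : ℤ)) = l
      omega
    · intro j hj
      simp only [Finset.mem_range] at hj
      show ((a + (j : ℤ) - a).toNat) = j
      omega
    · intro l hl
      simp only [Finset.mem_Icc] at hl
      rw [← zpow_natCast lam ((l - a).toNat), Int.toNat_of_nonneg (by omega)]
  rw [key]
  exact geo_nat_aux lam h0.le h1 _

/-- if `M` (indexed by `{-N,…,N}²`) decays exponentially both off the
diagonal and off the corners, and `g` is supported in `{-s,…,s}` with entries bounded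
by 1, then `φ = M g` satisfies `|φ_k| ≤ (2D/(1-λ)) λ^{|k|-s}` for `N-2s < |k| ≤ N`. -/
theorem periodic_inverse_decay_boundary
    (lam D : ℝ) (hlam0 : 0 < lam) (hlam1 : lam < 1) (hD : 0 < D)
    (s N : ℕ) (hN : 3 * s < N)
    (M : ℤ → ℤ → ℂ)
    (hM1 : ∀ k l : ℤ, |k| ≤ (N : ℤ) → |l| ≤ (N : ℤ) → |k - l| ≤ (N : ℤ) →
      ‖M k l‖ ≤ D * lam ^ (|k - l| : ℤ))
    (hM2 : ∀ k l : ℤ, |k| ≤ (N : ℤ) → |l| ≤ (N : ℤ) → (N : ℤ) + 1 ≤ |k - l| →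
      ‖M k l‖ ≤ D * lam ^ (2 * (N : ℤ) + 1 - |k - l|))
    (g : ℤ → ℂ)
    (hgsupp : ∀ l : ℤ, (s : ℤ) < |l| → g l = 0)
    (hgbd : ∀ l : ℤ, ‖g l‖ ≤ 1)
    (φ : ℤ → ℂ)
    (hφ : ∀ k : ℤ, φ k = ∑ l ∈ Finset.Icc (-(N : ℤ)) (N : ℤ), M k l * g l) :
    ∀ k : ℤ, (N : ℤ) - 2 * s < |k| → |k| ≤ (N : ℤ) →
      ‖φ k‖ ≤ (2 * D / (1 - lam)) * lam ^ (|k| - (s : ℤ)) := by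
  intro k hk1 hk2
  have hsN : (s : ℤ) < (N : ℤ) := by exact_mod_cast by omega
  have h1lam : (0:ℝ) < 1 - lam := by linarith
  have hks : (s : ℤ) < |k| := by omega
  have hzpos : ∀ m : ℤ, (0:ℝ) < lam ^ m := fun m => zpow_pos hlam0 m
  -- pointwise bound
  have hterm : ∀ l ∈ Finset.Icc (-(N : ℤ)) (N : ℤ),
      ‖M k l * g l‖ ≤ (fun l : ℤ => if |l| ≤ (s : ℤ) then
        D * lam ^ (|k| - (s:ℤ)) * (lam ^ ((s:ℤ) - l) + lam ^ ((s:ℤ) + l)) else 0) l := by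
    intro l hl
    simp only [Finset.mem_Icc] at hl
    by_cases hls : |l| ≤ (s : ℤ)
    · simp only [hls, if_true]
      obtain ⟨hls1, hls2⟩ := abs_le.mp hls
      have hlN : |l| ≤ (N : ℤ) := by omega
      have hmono : ∀ m n : ℤ, m ≤ n → lam ^ n ≤ lam ^ m :=
        fun m n h => zpow_le_zpow_right_of_le_one₀ hlam0 hlam1.le h
      have hkey : ‖M k l‖ ≤ D * lam ^ (|k| - (s:ℤ)) * (lam ^ ((s:ℤ) - l) + lam ^ ((s:ℤ) + l)) := by
        rcases le_or_gt (|k - l|) (N : ℤ) with hcase | hcase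
        · -- near-diagonal
          refine (hM1 k l hk2 hlN hcase).trans ?_
          rcases le_or_gt 0 k with hk0 | hk0
          · -- k ≥ 0, so |k - l| = k - l and |k| = k
            have hlk : |k| = k := abs_of_nonneg hk0
            have hks' : (s:ℤ) < k := by rwa [hlk] at hks
            have habs : |k - l| = k - l := by rw [abs_of_nonneg]; omega
            rw [habs, hlk]
            have hsplit : lam ^ (k - l) = lam ^ (k - (s:ℤ)) * lam ^ ((s:ℤ) - l) := by
              rw [← zpow_add₀ (ne_of_gt hlam0)]; ring_nf
            calc D * lam ^ (k - l) = D * lam ^ (k - (s:ℤ)) * lam ^ ((s:ℤ) - l) := by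
                  rw [hsplit]; ring
              _ ≤ D * lam ^ (k - (s:ℤ)) * (lam ^ ((s:ℤ) - l) + lam ^ ((s:ℤ) + l)) :=
                  mul_le_mul_of_nonneg_left (le_add_of_nonneg_right (hzpos _).le)
                    (mul_pos hD (hzpos _)).le
          · -- k < 0, so |k - l| = l - k and |k| = -k
            have hlk : |k| = -k := abs_of_neg hk0
            have hks' : (s:ℤ) < -k := by rwa [hlk] at hks
            have habs : |k - l| = l - k := by rw [abs_of_nonpos (by omega)]; ring
            rw [habs, hlk]
            have hsplit : lam ^ (l - k) = lam ^ (-k - (s:ℤ)) * lam ^ ((s:ℤ) + l) := by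
              rw [← zpow_add₀ (ne_of_gt hlam0)]; ring_nf
            calc D * lam ^ (l - k) = D * lam ^ (-k - (s:ℤ)) * lam ^ ((s:ℤ) + l) := by
                  rw [hsplit]; ring
              _ ≤ D * lam ^ (-k - (s:ℤ)) * (lam ^ ((s:ℤ) - l) + lam ^ ((s:ℤ) + l)) :=
                  mul_le_mul_of_nonneg_left (le_add_of_nonneg_left (hzpos _).le)
                    (mul_pos hD (hzpos _)).le
        · -- corner
          refine (hM2 k l hk2 hlN (by omega)).trans ?_
          rcases le_or_gt 0 k with hk0 | hk0
          · have hlk : |k| = k := abs_of_nonneg hk0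
            have hks' : (s:ℤ) < k := by rwa [hlk] at hks
            have hkN : k ≤ (N:ℤ) := by rw [hlk] at hk2; exact hk2
            have habs : |k - l| = k - l := by rw [abs_of_nonneg]; omega
            rw [habs, hlk]
            have hsplit : lam ^ (2 * (N:ℤ) + 1 - (k - l))
                = lam ^ (2 * (N:ℤ) + 1 - k - (s:ℤ)) * lam ^ ((s:ℤ) + l) := by
              rw [← zpow_add₀ (ne_of_gt hlam0)]; ring_nf
            have hm : lam ^ (2 * (N:ℤ) + 1 - k - (s:ℤ)) ≤ lam ^ (k - (s:ℤ)) :=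
              hmono _ _ (by omega)
            calc D * lam ^ (2 * (N:ℤ) + 1 - (k - l))
                = D * lam ^ ((s:ℤ) + l) * lam ^ (2 * (N:ℤ) + 1 - k - (s:ℤ)) := by
                  rw [hsplit]; ring
              _ ≤ D * lam ^ ((s:ℤ) + l) * lam ^ (k - (s:ℤ)) :=
                  mul_le_mul_of_nonneg_left hm (mul_pos hD (hzpos _)).le
              _ = D * lam ^ (k - (s:ℤ)) * lam ^ ((s:ℤ) + l) := by ring
              _ ≤ D * lam ^ (k - (s:ℤ)) * (lam ^ ((s:ℤ) - l) + lam ^ ((s:ℤ) + l)) :=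
                  mul_le_mul_of_nonneg_left (le_add_of_nonneg_left (hzpos _).le)
                    (mul_pos hD (hzpos _)).le
          · have hlk : |k| = -k := abs_of_neg hk0
            have hks' : (s:ℤ) < -k := by rwa [hlk] at hks
            have hkN : -k ≤ (N:ℤ) := by rw [hlk] at hk2; exact hk2
            have habs : |k - l| = l - k := by rw [abs_of_nonpos (by omega)]; ring
            rw [habs, hlk]
            have hsplit : lam ^ (2 * (N:ℤ) + 1 - (l - k))
                = lam ^ (2 * (N:ℤ) + 1 + k - (s:ℤ)) * lam ^ ((s:ℤ) - l) := by
              rw [← zpow_add₀ (ne_of_gt hlam0)]; ring_nf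
            have hm : lam ^ (2 * (N:ℤ) + 1 + k - (s:ℤ)) ≤ lam ^ (-k - (s:ℤ)) :=
              hmono _ _ (by omega)
            calc D * lam ^ (2 * (N:ℤ) + 1 - (l - k))
                = D * lam ^ ((s:ℤ) - l) * lam ^ (2 * (N:ℤ) + 1 + k - (s:ℤ)) := by
                  rw [hsplit]; ring
              _ ≤ D * lam ^ ((s:ℤ) - l) * lam ^ (-k - (s:ℤ)) :=
                  mul_le_mul_of_nonneg_left hm (mul_pos hD (hzpos _)).le
              _ = D * lam ^ (-k - (s:ℤ)) * lam ^ ((s:ℤ) - l) := by ring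
              _ ≤ D * lam ^ (-k - (s:ℤ)) * (lam ^ ((s:ℤ) - l) + lam ^ ((s:ℤ) + l)) :=
                  mul_le_mul_of_nonneg_left (le_add_of_nonneg_right (hzpos _).le)
                    (mul_pos hD (hzpos _)).le
      calc ‖M k l * g l‖ = ‖M k l‖ * ‖g l‖ := norm_mul _ _
        _ ≤ ‖M k l‖ * 1 := mul_le_mul_of_nonneg_left (hgbd l) (norm_nonneg _)
        _ = ‖M k l‖ := mul_one _
        _ ≤ _ := hkey
    · simp only [hls, if_false]
      rw [hgsupp l (not_le.mp hls), mul_zero, norm_zero]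
  -- sum the bounds
  rw [hφ k]
  refine (norm_sum_le _ _).trans ?_
  refine (Finset.sum_le_sum hterm).trans ?_
  have hsub : Finset.Icc (-(s:ℤ)) (s:ℤ) ⊆ Finset.Icc (-(N:ℤ)) (N:ℤ) := by
    intro x hx; simp only [Finset.mem_Icc] at *; omega
  have hsum_eq : ∑ l ∈ Finset.Icc (-(N : ℤ)) (N : ℤ), (if |l| ≤ (s : ℤ) then
        D * lam ^ (|k| - (s:ℤ)) * (lam ^ ((s:ℤ) - l) + lam ^ ((s:ℤ) + l)) else 0)
      = ∑ l ∈ Finset.Icc (-(s : ℤ)) (s : ℤ),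
        D * lam ^ (|k| - (s:ℤ)) * (lam ^ ((s:ℤ) - l) + lam ^ ((s:ℤ) + l)) := by
    rw [← Finset.sum_subset hsub]
    · refine Finset.sum_congr rfl ?_
      intro x hx; simp only [Finset.mem_Icc] at hx
      rw [if_pos (abs_le.mpr hx)]
    · intro x _ hx
      simp only [Finset.mem_Icc] at hx
      rw [if_neg (fun h => hx (abs_le.mp h))]
  rw [hsum_eq]
  have hG1 : ∑ l ∈ Finset.Icc (-(s:ℤ)) (s:ℤ), lam ^ ((s:ℤ) - l) ≤ 1 / (1 - lam) := by
    calc ∑ l ∈ Finset.Icc (-(s:ℤ)) (s:ℤ), lam ^ ((s:ℤ) - l)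
        = ∑ l ∈ Finset.Icc (-(s:ℤ)) (s:ℤ), lam ^ (l - (-(s:ℤ))) := by
          refine Finset.sum_nbij' (fun l => -l) (fun l => -l) ?_ ?_ ?_ ?_ ?_ <;>
            intro l hl <;> simp only [Finset.mem_Icc] at * <;>
              first
                | omega
                | (show lam ^ ((s:ℤ) - l) = lam ^ (-l - (-(s:ℤ))); ring_nf)
      _ ≤ 1 / (1 - lam) := geo_int_aux lam hlam0 hlam1 _ _
  have hG2 : ∑ l ∈ Finset.Icc (-(s:ℤ)) (s:ℤ), lam ^ ((s:ℤ) + l) ≤ 1 / (1 - lam) := by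
    calc ∑ l ∈ Finset.Icc (-(s:ℤ)) (s:ℤ), lam ^ ((s:ℤ) + l)
        = ∑ l ∈ Finset.Icc (-(s:ℤ)) (s:ℤ), lam ^ (l - (-(s:ℤ))) := by
          refine Finset.sum_congr rfl fun l _ => ?_; ring_nf
      _ ≤ 1 / (1 - lam) := geo_int_aux lam hlam0 hlam1 _ _
  have hDlam : (0:ℝ) < D * lam ^ (|k| - (s:ℤ)) := mul_pos hD (hzpos _)
  calc ∑ l ∈ Finset.Icc (-(s : ℤ)) (s : ℤ),
        D * lam ^ (|k| - (s:ℤ)) * (lam ^ ((s:ℤ) - l) + lam ^ ((s:ℤ) + l))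
      = D * lam ^ (|k| - (s:ℤ)) *
        ((∑ l ∈ Finset.Icc (-(s:ℤ)) (s:ℤ), lam ^ ((s:ℤ) - l))
          + ∑ l ∈ Finset.Icc (-(s:ℤ)) (s:ℤ), lam ^ ((s:ℤ) + l)) := by
        rw [← Finset.mul_sum, Finset.sum_add_distrib]
    _ ≤ D * lam ^ (|k| - (s:ℤ)) * (1 / (1 - lam) + 1 / (1 - lam)) :=
        mul_le_mul_of_nonneg_left (add_le_add hG1 hG2) hDlam.le
    _ = (2 * D / (1 - lam)) * lam ^ (|k| - (s:ℤ)) := by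
        field_simp; ring
end

section
/- Let s, N ∈ ℕ with N > 3s, B > 0, D > 0, λ ∈ (0,1). Let E be a matrix on {-N,...,N}² with E_{k,l} = 0 unless (k,l) lies in one of the two corner blocks {(k,l) : k+2N+1-l ≤ 2s or l+2N+1-k ≤ 2s}, and |E_{k,l}| ≤ B. Let φ be a vector with |φ_k| ≤ (2D/(1-λ))·λ^{|k|-s}. Then ‖Eφ‖ ≤ 2√2·B·D·(λ^s - λ^{s+1})^{-3}·λ^N. -/
open scoped BigOperators
open Finset
private lemma geom_sum_le' {lam : ℝ} (h0 : 0 ≤ lam) (h1 : lam < 1) (n : ℕ) :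
    ∑ j ∈ Finset.range n, lam ^ j ≤ 1 / (1 - lam) := by
  have h1l : (0:ℝ) < 1 - lam := by linarith
  have hne : lam ≠ 1 := by linarith
  rw [geom_sum_eq hne]
  have he : (lam ^ n - 1)/(lam - 1) = (1 - lam ^ n)/(1 - lam) := by
    rw [div_eq_div_iff (by linarith) (by linarith)]; ring
  rw [he]
  have hpn : 0 ≤ lam ^ n := pow_nonneg h0 n
  gcongr
  linarith

private lemma geom_tail_asc {lam : ℝ} (h0 : 0 < lam) (h1 : lam < 1) (a b c : ℤ) :
    ∑ l ∈ Finset.Icc a b, lam ^ (l - c) ≤ lam ^ (a - c) / (1 - lam) := by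
  have h1l : (0:ℝ) < 1 - lam := by linarith
  have hane : lam ≠ 0 := ne_of_gt h0
  rcases le_or_gt a b with hab | hab
  · have heq : ∑ l ∈ Finset.Icc a b, lam ^ (l - c)
        = ∑ j ∈ Finset.range ((b - a).toNat + 1), lam ^ (a - c) * lam ^ j := by
      refine Finset.sum_nbij' (fun l => (l - a).toNat) (fun j => a + (j:ℤ)) ?_ ?_ ?_ ?_ ?_
      · intro l hl; simp only [Finset.mem_Icc] at hl; simp only [Finset.mem_range]; omega
      · intro j hj; simp only [Finset.mem_range] at hj; simp only [Finset.mem_Icc]; omega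
      · intro l hl; simp only [Finset.mem_Icc] at hl
        show a + (((l - a).toNat : ℕ) : ℤ) = l; omega
      · intro j hj; simp only [Finset.mem_range] at hj
        show ((a + (j:ℤ)) - a).toNat = j; omega
      · intro l hl
        simp only [Finset.mem_Icc] at hl
        have hcast : (((l - a).toNat : ℤ)) = l - a := Int.toNat_of_nonneg (by omega)
        rw [← zpow_natCast lam ((l-a).toNat), hcast, ← zpow_add₀ hane,
          show a - c + (l - a) = l - c by ring]
    rw [heq, ← Finset.mul_sum]
    have hg := geom_sum_le' h0.le h1 ((b-a).toNat + 1)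
    have hz : (0:ℝ) < lam ^ (a - c) := zpow_pos h0 _
    calc lam ^ (a-c) * ∑ j ∈ Finset.range ((b - a).toNat + 1), lam ^ j
        ≤ lam ^ (a-c) * (1/(1-lam)) := by gcongr
      _ = lam ^ (a-c) / (1-lam) := by ring
  · rw [Finset.Icc_eq_empty (by omega : ¬ a ≤ b)]
    simp only [Finset.sum_empty]
    positivity

private lemma geom_tail_desc {lam : ℝ} (h0 : 0 < lam) (h1 : lam < 1) (a b c : ℤ) :
    ∑ l ∈ Finset.Icc a b, lam ^ (-l - c) ≤ lam ^ (-b - c) / (1 - lam) := by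
  have h1l : (0:ℝ) < 1 - lam := by linarith
  have hane : lam ≠ 0 := ne_of_gt h0
  rcases le_or_gt a b with hab | hab
  · have heq : ∑ l ∈ Finset.Icc a b, lam ^ (-l - c)
        = ∑ j ∈ Finset.range ((b - a).toNat + 1), lam ^ (-b - c) * lam ^ j := by
      refine Finset.sum_nbij' (fun l => (b - l).toNat) (fun j => b - (j:ℤ)) ?_ ?_ ?_ ?_ ?_
      · intro l hl; simp only [Finset.mem_Icc] at hl; simp only [Finset.mem_range]; omega
      · intro j hj; simp only [Finset.mem_range] at hj; simp only [Finset.mem_Icc]; omega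
      · intro l hl; simp only [Finset.mem_Icc] at hl
        show b - (((b - l).toNat : ℕ) : ℤ) = l; omega
      · intro j hj; simp only [Finset.mem_range] at hj
        show (b - (b - (j:ℤ))).toNat = j; omega
      · intro l hl
        simp only [Finset.mem_Icc] at hl
        have hcast : (((b - l).toNat : ℤ)) = b - l := Int.toNat_of_nonneg (by omega)
        rw [← zpow_natCast lam ((b-l).toNat), hcast, ← zpow_add₀ hane,
          show -b - c + (b - l) = -l - c by ring]
    rw [heq, ← Finset.mul_sum]
    have hg := geom_sum_le' h0.le h1 ((b-a).toNat + 1)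
    have hz : (0:ℝ) < lam ^ (-b - c) := zpow_pos h0 _
    calc lam ^ (-b-c) * ∑ j ∈ Finset.range ((b - a).toNat + 1), lam ^ j
        ≤ lam ^ (-b-c) * (1/(1-lam)) := by gcongr
      _ = lam ^ (-b-c) / (1-lam) := by ring
  · rw [Finset.Icc_eq_empty (by omega : ¬ a ≤ b)]
    simp only [Finset.sum_empty]
    positivity


/-- the main computational estimate in the proof of Theorem 5.1.
If `E` (indexed by `{-N,…,N}²`) is supported in the two `2s`-wide corner blocks and
bounded by `B`, and `|φ_k| ≤ (2D/(1-λ)) λ^{|k|-s}`, then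
`‖Eφ‖ ≤ 2√2 B D (λ^s - λ^{s+1})^{-3} λ^N`. -/
theorem corner_error_estimate
    (s N : ℕ) (hN : 3 * s < N)
    (B D lam : ℝ) (hB : 0 < B) (hD : 0 < D) (hlam0 : 0 < lam) (hlam1 : lam < 1)
    (E : ℤ → ℤ → ℂ)
    (hEsupp : ∀ k l : ℤ, |k| ≤ (N : ℤ) → |l| ≤ (N : ℤ) →
      ¬ (k + 2 * (N : ℤ) + 1 - l ≤ 2 * s ∨ l + 2 * (N : ℤ) + 1 - k ≤ 2 * s) → E k l = 0)
    (hEbd : ∀ k l : ℤ, ‖E k l‖ ≤ B)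
    (φ : ℤ → ℂ)
    (hφ : ∀ k : ℤ, ‖φ k‖ ≤ (2 * D / (1 - lam)) * lam ^ (|k| - (s : ℤ))) :
    Real.sqrt (∑ k ∈ Finset.Icc (-(N : ℤ)) (N : ℤ),
        ‖∑ l ∈ Finset.Icc (-(N : ℤ)) (N : ℤ), E k l * φ l‖ ^ 2) ≤
      2 * Real.sqrt 2 * B * D * (lam ^ (s : ℤ) - lam ^ ((s : ℤ) + 1)) ^ (-3 : ℤ) * lam ^ (N : ℤ) := by
  have hsN : (3*(s:ℤ)) < (N:ℤ) := by exact_mod_cast hN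
  have h1l : (0:ℝ) < 1 - lam := by linarith
  have hne : lam ≠ 0 := ne_of_gt hlam0
  set I := Finset.Icc (-(N:ℤ)) (N:ℤ) with hI
  set C : ℝ := 2*D/(1-lam) with hC
  have hC0 : 0 < C := by positivity
  set M : ℤ := 2*(N:ℤ)+1-3*(s:ℤ) with hM
  set X : ℝ := B*C/(1-lam) with hX
  have hX0 : 0 < X := by positivity
  -- key per-row bound
  have key : ∀ k ∈ I, ‖∑ l ∈ I, E k l * φ l‖ ≤ X * (lam^(k+M) + lam^(-k+M)) := by
    intro k hk
    simp only [hI, Finset.mem_Icc] at hk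
    by_cases hlow : k ≤ 2*(s:ℤ) - N - 1
    · set a : ℤ := k + 2*(N:ℤ) + 1 - 2*(s:ℤ) with ha
      have hEzero : ∀ l, -(N:ℤ) ≤ l → l ≤ N → E k l ≠ 0 → a ≤ l := by
        intro l h1 h2 hEne
        by_contra hcon
        apply hEne
        apply hEsupp k l (abs_le.mpr ⟨hk.1, hk.2⟩) (abs_le.mpr ⟨h1, h2⟩)
        push_neg
        omega
      have hterm : ∀ l ∈ I.filter (fun l => E k l ≠ 0),
          ‖E k l * φ l‖ ≤ (B*C) * lam ^ (l - (s:ℤ)) := by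
        intro l hl
        simp only [Finset.mem_filter, hI, Finset.mem_Icc] at hl
        have hal : a ≤ l := hEzero l hl.1.1 hl.1.2 hl.2
        have habs : |l| = l := abs_of_nonneg (by omega)
        rw [norm_mul, mul_assoc]
        have h2 := hφ l
        rw [habs] at h2
        exact mul_le_mul (hEbd k l) h2 (norm_nonneg _) hB.le
      have hsub : I.filter (fun l => E k l ≠ 0) ⊆ Finset.Icc a (N:ℤ) := by
        intro l hl
        simp only [Finset.mem_filter, hI, Finset.mem_Icc] at hl ⊢
        exact ⟨hEzero l hl.1.1 hl.1.2 hl.2, hl.1.2⟩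
      calc ‖∑ l ∈ I, E k l * φ l‖ ≤ ∑ l ∈ I, ‖E k l * φ l‖ := norm_sum_le _ _
        _ = ∑ l ∈ I.filter (fun l => E k l ≠ 0), ‖E k l * φ l‖ := by
            rw [Finset.sum_filter_of_ne]
            intro l hl hne0 h0
            exact hne0 (by rw [h0, zero_mul, norm_zero])
        _ ≤ ∑ l ∈ I.filter (fun l => E k l ≠ 0), (B*C) * lam ^ (l - (s:ℤ)) :=
            Finset.sum_le_sum hterm
        _ ≤ ∑ l ∈ Finset.Icc a (N:ℤ), (B*C) * lam ^ (l - (s:ℤ)) :=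
            Finset.sum_le_sum_of_subset_of_nonneg hsub (fun l _ _ => by positivity)
        _ = (B*C) * ∑ l ∈ Finset.Icc a (N:ℤ), lam ^ (l - (s:ℤ)) := by rw [Finset.mul_sum]
        _ ≤ (B*C) * (lam ^ (a - (s:ℤ)) / (1 - lam)) :=
            mul_le_mul_of_nonneg_left (geom_tail_asc hlam0 hlam1 _ _ _) (by positivity)
        _ ≤ X * (lam^(k+M) + lam^(-k+M)) := by
            have he : a - (s:ℤ) = k + M := by omega
            rw [he]
            have hv : (0:ℝ) < lam ^ (-k+M) := zpow_pos hlam0 _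
            have heq : B*C*(lam^(k+M)/(1-lam)) = X * lam^(k+M) := by rw [hX]; ring
            rw [heq]
            exact mul_le_mul_of_nonneg_left (by linarith) hX0.le
    · by_cases hhigh : (N:ℤ) + 1 - 2*(s:ℤ) ≤ k
      · set b : ℤ := k - 2*(N:ℤ) - 1 + 2*(s:ℤ) with hb
        have hEzero : ∀ l, -(N:ℤ) ≤ l → l ≤ N → E k l ≠ 0 → l ≤ b := by
          intro l h1 h2 hEne
          by_contra hcon
          apply hEne
          apply hEsupp k l (abs_le.mpr ⟨hk.1, hk.2⟩) (abs_le.mpr ⟨h1, h2⟩)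
          push_neg
          omega
        have hterm : ∀ l ∈ I.filter (fun l => E k l ≠ 0),
            ‖E k l * φ l‖ ≤ (B*C) * lam ^ (-l - (s:ℤ)) := by
          intro l hl
          simp only [Finset.mem_filter, hI, Finset.mem_Icc] at hl
          have hal : l ≤ b := hEzero l hl.1.1 hl.1.2 hl.2
          have habs : |l| = -l := abs_of_nonpos (by omega)
          rw [norm_mul, mul_assoc]
          have h2 := hφ l
          rw [habs] at h2
          exact mul_le_mul (hEbd k l) h2 (norm_nonneg _) hB.le
        have hsub : I.filter (fun l => E k l ≠ 0) ⊆ Finset.Icc (-(N:ℤ)) b := by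
          intro l hl
          simp only [Finset.mem_filter, hI, Finset.mem_Icc] at hl ⊢
          exact ⟨hl.1.1, hEzero l hl.1.1 hl.1.2 hl.2⟩
        calc ‖∑ l ∈ I, E k l * φ l‖ ≤ ∑ l ∈ I, ‖E k l * φ l‖ := norm_sum_le _ _
          _ = ∑ l ∈ I.filter (fun l => E k l ≠ 0), ‖E k l * φ l‖ := by
              rw [Finset.sum_filter_of_ne]
              intro l hl hne0 h0
              exact hne0 (by rw [h0, zero_mul, norm_zero])
          _ ≤ ∑ l ∈ I.filter (fun l => E k l ≠ 0), (B*C) * lam ^ (-l - (s:ℤ)) :=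
              Finset.sum_le_sum hterm
          _ ≤ ∑ l ∈ Finset.Icc (-(N:ℤ)) b, (B*C) * lam ^ (-l - (s:ℤ)) :=
              Finset.sum_le_sum_of_subset_of_nonneg hsub (fun l _ _ => by positivity)
          _ = (B*C) * ∑ l ∈ Finset.Icc (-(N:ℤ)) b, lam ^ (-l - (s:ℤ)) := by rw [Finset.mul_sum]
          _ ≤ (B*C) * (lam ^ (-b - (s:ℤ)) / (1 - lam)) :=
              mul_le_mul_of_nonneg_left (geom_tail_desc hlam0 hlam1 _ _ _) (by positivity)
          _ ≤ X * (lam^(k+M) + lam^(-k+M)) := by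
              have he : -b - (s:ℤ) = -k + M := by omega
              rw [he]
              have hv : (0:ℝ) < lam ^ (k+M) := zpow_pos hlam0 _
              have heq : B*C*(lam^(-k+M)/(1-lam)) = X * lam^(-k+M) := by rw [hX]; ring
              rw [heq]
              exact mul_le_mul_of_nonneg_left (by linarith) hX0.le
      · have hz : ∑ l ∈ I, E k l * φ l = 0 := by
          apply Finset.sum_eq_zero
          intro l hl
          simp only [hI, Finset.mem_Icc] at hl
          rw [hEsupp k l (abs_le.mpr ⟨hk.1, hk.2⟩) (abs_le.mpr ⟨hl.1, hl.2⟩)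
            (by push_neg; omega), zero_mul]
        rw [hz, norm_zero]
        positivity
  -- square the per-row bound
  have hμ0 : (0:ℝ) < lam*lam := mul_pos hlam0 hlam0
  have hμ1 : lam*lam < 1 := by nlinarith
  have hsq : ∀ k ∈ I, ‖∑ l ∈ I, E k l * φ l‖^2
      ≤ X^2 * (2*((lam*lam)^(k+M) + (lam*lam)^(-k+M))) := by
    intro k hk
    have h1 := key k hk
    have h2 : ‖∑ l ∈ I, E k l * φ l‖^2 ≤ (X * (lam^(k+M) + lam^(-k+M)))^2 :=
      pow_le_pow_left₀ (norm_nonneg _) h1 2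
    refine h2.trans ?_
    have e1 : (lam*lam)^(k+M) = lam^(k+M) * lam^(k+M) := mul_zpow _ _ _
    have e2 : (lam*lam)^(-k+M) = lam^(-k+M) * lam^(-k+M) := mul_zpow _ _ _
    rw [e1, e2]
    nlinarith [mul_nonneg (sq_nonneg X) (sq_nonneg (lam^(k+M) - lam^(-k+M)))]
  -- sum the geometric series in k
  have hA : ∑ k ∈ I, (lam*lam)^(k+M) ≤ (lam*lam)^(-(N:ℤ)+M)/(1-lam*lam) := by
    have h := geom_tail_asc hμ0 hμ1 (-(N:ℤ)) (N:ℤ) (-M)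
    simp only [sub_neg_eq_add] at h
    exact h
  have hB' : ∑ k ∈ I, (lam*lam)^(-k+M) ≤ (lam*lam)^(-(N:ℤ)+M)/(1-lam*lam) := by
    have h := geom_tail_desc hμ0 hμ1 (-(N:ℤ)) (N:ℤ) (-M)
    simp only [sub_neg_eq_add] at h
    exact h
  obtain ⟨t, ht⟩ : ∃ t : ℕ, N = 3*s + 1 + t := ⟨N - 3*s - 1, by omega⟩
  have hexp : (-(N:ℤ)+M) = ((t + 2 : ℕ) : ℤ) := by push_cast; omega
  have hSbound : ∑ k ∈ I, ‖∑ l ∈ I, E k l * φ l‖^2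
      ≤ 4*X^2 * ((lam*lam)^(t+2)/(1-lam)) := by
    calc ∑ k ∈ I, ‖∑ l ∈ I, E k l * φ l‖^2
        ≤ ∑ k ∈ I, X^2 * (2*((lam*lam)^(k+M) + (lam*lam)^(-k+M))) := Finset.sum_le_sum hsq
      _ = 2*X^2 * ((∑ k ∈ I, (lam*lam)^(k+M)) + ∑ k ∈ I, (lam*lam)^(-k+M)) := by
          rw [mul_add, Finset.mul_sum, Finset.mul_sum, ← Finset.sum_add_distrib]
          exact Finset.sum_congr rfl (fun k _ => by ring)
      _ ≤ 2*X^2 * ((lam*lam)^(-(N:ℤ)+M)/(1-lam*lam) + (lam*lam)^(-(N:ℤ)+M)/(1-lam*lam)) := by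
          exact mul_le_mul_of_nonneg_left (add_le_add hA hB') (by positivity)
      _ = 4*X^2 * ((lam*lam)^(-(N:ℤ)+M)/(1-lam*lam)) := by ring
      _ ≤ 4*X^2 * ((lam*lam)^(-(N:ℤ)+M)/(1-lam)) := by
          refine mul_le_mul_of_nonneg_left ?_ (by positivity)
          apply div_le_div_of_nonneg_left (zpow_pos hμ0 _).le h1l
          nlinarith
      _ = 4*X^2 * ((lam*lam)^(t+2)/(1-lam)) := by
          rw [hexp, zpow_natCast]
  -- rewrite the right-hand side
  have hQR : (lam ^ (s:ℤ) - lam ^ ((s:ℤ)+1)) ^ (-3 : ℤ) = ((lam^(s:ℕ)*(1-lam))^3)⁻¹ := by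
    have hQ : (lam ^ (s:ℤ) - lam ^ ((s:ℤ)+1)) = lam^(s:ℕ) * (1-lam) := by
      rw [zpow_add_one₀ hne, zpow_natCast]; ring
    rw [hQ, show ((-3:ℤ)) = -((3:ℕ):ℤ) by norm_num, zpow_neg, zpow_natCast]
  rw [hQR, show lam ^ ((N:ℕ):ℤ) = lam ^ (N:ℕ) from zpow_natCast lam N]
  have hb0 : (0:ℝ) < lam^(s:ℕ)*(1-lam) := mul_pos (pow_pos hlam0 _) h1l
  have hR0 : (0:ℝ) < 2*Real.sqrt 2*B*D*((lam^(s:ℕ)*(1-lam))^3)⁻¹*lam^(N:ℕ) := by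
    have h2s : (0:ℝ) < 2*Real.sqrt 2 := by positivity
    exact mul_pos (mul_pos (mul_pos (mul_pos h2s hB) hD)
      (inv_pos.mpr (pow_pos hb0 3))) (pow_pos hlam0 _)
  -- final comparison
  have hs2 : Real.sqrt 2 ^ 2 = 2 := Real.sq_sqrt (by norm_num)
  have hcubic : 2*lam^2*(1-lam) ≤ 1 := by
    nlinarith [mul_nonneg hlam0.le (sq_nonneg (3*lam-2))]
  have hmain : ∑ k ∈ I, ‖∑ l ∈ I, E k l * φ l‖^2
      ≤ (2*Real.sqrt 2*B*D*((lam^(s:ℕ)*(1-lam))^3)⁻¹*lam^(N:ℕ))^2 := by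
    refine hSbound.trans ?_
    have eL : 4*X^2 * ((lam*lam)^(t+2)/(1-lam))
        = (2*lam^2*(1-lam)) * (8*B^2*D^2*lam^(2*t+2)/(1-lam)^6) := by
      rw [hX, hC]
      field_simp
      ring
    have eR : (2*Real.sqrt 2*B*D*((lam^(s:ℕ)*(1-lam))^3)⁻¹*lam^(N:ℕ))^2
        = 8*B^2*D^2*lam^(2*t+2)/(1-lam)^6 := by
      have h1 : (2*Real.sqrt 2*B*D*((lam^(s:ℕ)*(1-lam))^3)⁻¹*lam^(N:ℕ))^2
          = Real.sqrt 2^2 * (4*B^2*D^2*(((lam^(s:ℕ)*(1-lam))^3)⁻¹)^2*(lam^(N:ℕ))^2) := by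
        ring
      rw [h1, hs2]
      subst ht
      have hps : lam ^ (s:ℕ) ≠ 0 := (pow_pos hlam0 _).ne'
      field_simp
      ring
    rw [eL, eR]
    calc (2*lam^2*(1-lam)) * (8*B^2*D^2*lam^(2*t+2)/(1-lam)^6)
        ≤ 1 * (8*B^2*D^2*lam^(2*t+2)/(1-lam)^6) :=
          mul_le_mul_of_nonneg_right hcubic (by positivity)
      _ = _ := by rw [one_mul]
  calc Real.sqrt (∑ k ∈ I, ‖∑ l ∈ I, E k l * φ l‖^2)
      ≤ Real.sqrt ((2*Real.sqrt 2*B*D*((lam^(s:ℕ)*(1-lam))^3)⁻¹*lam^(N:ℕ))^2) :=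
        Real.sqrt_le_sqrt hmain
    _ = _ := Real.sqrt_sq hR0.le
end
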